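/- arXiv:2401.02775 — 8 statements merged into one kernel-verified Lean document; each statement's English description precedes it below -/
import Mathlib

section
/- Let M be a monoid that embeds into a group (i.e., there exists a group G and an injective monoid homomorphism from M into G). Then there exists a simple graph Γ* such that the bimorphism monoid Bi(Γ*) is isomorphic to M as a monoid. -/
/-- The bimorphism monoid of a simple graph `Γ`: the submonoid of `Function.End V`
(self-maps of the vertex set under composition) consisting of the bijective
self-maps that preserve adjacency. -/
def biSubmonoid {V : Type*} (Γ : SimpleGraph V) : Submonoid (Function.End V) where
  carrier := {f | Function.Bijective f ∧ ∀ a b, Γ.Adj a b → Γ.Adj (f a) (f b)}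
  one_mem' := ⟨Function.bijective_id, fun _ _ h => h⟩
  mul_mem' := by
    rintro f g ⟨hf, hf'⟩ ⟨hg, hg'⟩
    exact ⟨hf.comp hg, fun a b h => hf' _ _ (hg' _ _ h)⟩

/-!
Realise `M` as a submonoid `N` of a group `G` and build a graph on which `N` acts by left
multiplication. It has a rigid frame: a pendant edge `leaf – hub`, vertices `up x` joined to
`hub`, and `down t` joined to `up x` whenever `t ≤ x`, for `x, t` in a well-order without
maximum. Each `a : G` gives a vertex `elt a`, joined to the frame vertex `up mark` iff
`a ∈ N`, and each pair `a, s` a triangle `elt a, tag a s, step a s` with `step a s` also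
joined to `elt (a * s)` and `tag a s` joined to the frame vertex `up (color s)`.

A bimorphism fixes `leaf`, the only vertex of degree one, hence maps the frame into itself.
On the frame it induces maps `α, β` with `t ≤ x → β t ≤ α x`, `α` onto (`up` vertices lie
on no triangle, gadget vertices do) and `β` injective, and well-founded induction forces
`α = β = id`. Then `elt 1` goes to some `elt n` with `n ∈ N`, and following the gadgets,
which the labels `color s` make distinguishable, shows the bimorphism is `n • ·`.
-/

open Function

namespace SimpleGraph

variable {V W : Type*} {Γ : SimpleGraph V} {Δ : SimpleGraph W}

def OnTriangle (Γ : SimpleGraph V) (v : V) : Prop :=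
  ∃ u w, Γ.Adj v u ∧ Γ.Adj v w ∧ Γ.Adj u w

theorem OnTriangle.map (f : Γ →g Δ) {v : V} (h : Γ.OnTriangle v) : Δ.OnTriangle (f v) :=
  let ⟨u, w, hu, hw, huw⟩ := h
  ⟨f u, f w, f.map_adj hu, f.map_adj hw, f.map_adj huw⟩

end SimpleGraph

theorem IsWellOrder.eq_id_of_le_imp_le {σ : Type*} (r : σ → σ → Prop) [IsWellOrder σ r]
    {α β : σ → σ} (hα : Surjective α) (hβ : Injective β)
    (H : ∀ t s, r t s ∨ t = s → r (β t) (α s) ∨ β t = α s) (x : σ) :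
    α x = x ∧ β x = x := by
  induction x using IsWellFounded.induction r with
  | ind x IH =>
  have below : ∀ y, r (β y) x → β y = y := fun y hy => hβ (IH _ hy).2
  have hβx : r (β x) x ∨ β x = x → β x = x := fun h => h.elim (below x) id
  have hαx : α x = x := by
    obtain ⟨s, hs⟩ := hα x
    rcases trichotomous_of r s x with hsx | rfl | hxs
    · obtain rfl : s = x := (IH s hsx).1.symm.trans hs
      exact (irrefl_of r s hsx).elim
    · exact hs
    · have hx : β x = x := hβx (hs ▸ H x s (.inl hxs))
      rcases hs ▸ H s s (.inr rfl) with hsx | hsx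
      · exact (asymm_of r hxs (below s hsx ▸ hsx)).elim
      · obtain rfl : s = x := hβ (hsx.trans hx.symm)
        exact (irrefl_of r s hxs).elim
  have hle := H x x (Or.inr rfl)
  rw [hαx] at hle
  exact ⟨hαx, hβx hle⟩

namespace BimorphismRealization

variable {G : Type*}

variable (G) in
/-- The factor `ℕ` removes any maximum, so that every `down t` has the two neighbours `up t`
and `up t.succ`. -/
def Index : Type _ := Option G × ℕ

def Index.lt : Index G → Index G → Prop := Prod.Lex WellOrderingRel (· < ·)

instance : IsWellOrder (Index G) Index.lt :=
  inferInstanceAs (IsWellOrder (Option G × ℕ) (Prod.Lex WellOrderingRel (· < ·)))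

namespace Index

def succ (t : Index G) : Index G := (t.1, t.2 + 1)

def mark : Index G := (none, 0)

def color (s : G) : Index G := (some s, 0)

theorem lt_succ (t : Index G) : Index.lt t t.succ :=
  Prod.Lex.right _ t.2.lt_succ_self

theorem succ_ne (t : Index G) : t.succ ≠ t :=
  fun h => (t.2.succ_ne_self) (congrArg Prod.snd h)

theorem color_injective : Injective (color (G := G)) :=
  fun _ _ h => Option.some_injective _ (congrArg Prod.fst h)

theorem color_ne_mark (s : G) : color s ≠ mark :=
  fun h => Option.some_ne_none s (congrArg Prod.fst h)

end Index

variable (G) in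
inductive Vertex
  | leaf
  | hub
  | up (x : Index G)
  | down (t : Index G)
  | elt (a : G)
  | tag (a s : G)
  | step (a s : G)

open Vertex

variable [Group G] {N : Submonoid G}

variable (N) in
inductive Edge : Vertex G → Vertex G → Prop
  | leaf_hub : Edge leaf hub
  | hub_up (x) : Edge hub (up x)
  | up_down (x t) : Index.lt t x ∨ t = x → Edge (up x) (down t)
  | elt_up_mark (a) : a ∈ N → Edge (elt a) (up .mark)
  | tag_elt (a s) : Edge (tag a s) (elt a)
  | tag_up_color (a s) : Edge (tag a s) (up (.color s))
  | tag_step (a s) : Edge (tag a s) (step a s)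
  | step_elt (a s) : Edge (step a s) (elt a)
  | step_elt_mul (a s) : Edge (step a s) (elt (a * s))

variable (N) in
def graph : SimpleGraph (Vertex G) := SimpleGraph.fromRel (Edge N)

theorem adj_iff {u v : Vertex G} : (graph N).Adj u v ↔ u ≠ v ∧ (Edge N u v ∨ Edge N v u) :=
  SimpleGraph.fromRel_adj _ u v

theorem Edge.adj {u v : Vertex G} (h : Edge N u v) : (graph N).Adj u v :=
  adj_iff.2 ⟨by cases h <;> simp, Or.inl h⟩

theorem eq_hub_of_adj_leaf {v : Vertex G} (h : (graph N).Adj v leaf) : v = hub := by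
  rcases adj_iff.1 h with ⟨-, h | h⟩ <;> cases h
  rfl

theorem eq_leaf_or_up_of_adj_hub {v : Vertex G} (h : (graph N).Adj v hub) :
    v = leaf ∨ ∃ x, v = up x := by
  rcases adj_iff.1 h with ⟨-, h | h⟩ <;> cases h <;> simp_all

theorem eq_of_adj_up {v : Vertex G} {y : Index G} (h : (graph N).Adj v (up y)) :
    v = hub ∨ (∃ t, v = down t ∧ (Index.lt t y ∨ t = y)) ∨
      (∃ a s, v = tag a s ∧ y = .color s) ∨ ∃ a ∈ N, v = elt a ∧ y = .mark := by
  rcases adj_iff.1 h with ⟨-, h | h⟩ <;> cases h <;> simp_all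

theorem eq_up_of_adj_down {v : Vertex G} {t : Index G} (h : (graph N).Adj v (down t)) :
    ∃ x, v = up x ∧ (Index.lt t x ∨ t = x) := by
  rcases adj_iff.1 h with ⟨-, h | h⟩ <;> cases h
  exact ⟨_, rfl, ‹_›⟩

theorem eq_of_adj_elt {v : Vertex G} {a : G} (h : (graph N).Adj v (elt a)) :
    (∃ s, v = tag a s) ∨ (∃ s, v = step a s) ∨ (∃ b s, v = step b s ∧ b * s = a) ∨
      v = up .mark := by
  rcases adj_iff.1 h with ⟨-, h | h⟩ <;> cases h <;> simp_all

theorem eq_of_adj_tag {v : Vertex G} {a s : G} (h : (graph N).Adj v (tag a s)) :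
    v = elt a ∨ v = up (.color s) ∨ v = step a s := by
  rcases adj_iff.1 h with ⟨-, h | h⟩ <;> cases h <;> simp_all

theorem eq_of_adj_step {v : Vertex G} {a s : G} (h : (graph N).Adj v (step a s)) :
    v = tag a s ∨ v = elt a ∨ v = elt (a * s) := by
  rcases adj_iff.1 h with ⟨-, h | h⟩ <;> cases h <;> simp_all

theorem onTriangle_or_eq (v : Vertex G) : (graph N).OnTriangle v ∨ v = leaf ∨ v = hub ∨
    (∃ x, v = up x) ∨ ∃ t, v = down t := by
  cases v with
  | leaf => exact .inr (.inl rfl)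
  | hub => exact .inr (.inr (.inl rfl))
  | up x => exact .inr (.inr (.inr (.inl ⟨x, rfl⟩)))
  | down t => exact .inr (.inr (.inr (.inr ⟨t, rfl⟩)))
  | elt a => exact .inl ⟨tag a 1, step a 1, (Edge.tag_elt a 1).adj.symm,
      (Edge.step_elt a 1).adj.symm, (Edge.tag_step a 1).adj⟩
  | tag a s => exact .inl ⟨elt a, step a s, (Edge.tag_elt a s).adj, (Edge.tag_step a s).adj,
      (Edge.step_elt a s).adj.symm⟩
  | step a s => exact .inl ⟨tag a s, elt a, (Edge.tag_step a s).adj.symm,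
      (Edge.step_elt a s).adj, (Edge.tag_elt a s).adj⟩

theorem not_onTriangle_up (y : Index G) : ¬(graph N).OnTriangle (up y) := by
  rintro ⟨u, w, hu, hw, huw⟩
  rcases eq_of_adj_up hu.symm with rfl | ⟨t, rfl, -⟩ | ⟨a, s, rfl, rfl⟩ | ⟨a, -, rfl, rfl⟩ <;>
  rcases eq_of_adj_up hw.symm with rfl | ⟨t', rfl, -⟩ | ⟨a', s', rfl, hy⟩ | ⟨a', -, rfl, hy⟩ <;>
  rcases adj_iff.1 huw with ⟨-, h | h⟩ <;> cases h <;>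
    first | exact Index.color_ne_mark _ hy | exact Index.color_ne_mark _ hy.symm

theorem exists_adj_ne_of_ne_leaf {v : Vertex G} (hv : v ≠ leaf) :
    ∃ u w, u ≠ w ∧ (graph N).Adj v u ∧ (graph N).Adj v w := by
  cases v with
  | leaf => exact absurd rfl hv
  | hub => exact ⟨leaf, up .mark, by simp, Edge.leaf_hub.adj.symm, (Edge.hub_up _).adj⟩
  | up x => exact ⟨hub, down x, by simp, (Edge.hub_up x).adj.symm,
      (Edge.up_down x x (.inr rfl)).adj⟩
  | down t => exact ⟨up t, up t.succ, by simpa using t.succ_ne.symm,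
      (Edge.up_down t t (.inr rfl)).adj.symm, (Edge.up_down t.succ t (.inl t.lt_succ)).adj.symm⟩
  | elt a => exact ⟨tag a 1, step a 1, by simp, (Edge.tag_elt a 1).adj.symm,
      (Edge.step_elt a 1).adj.symm⟩
  | tag a s => exact ⟨elt a, step a s, by simp, (Edge.tag_elt a s).adj, (Edge.tag_step a s).adj⟩
  | step a s => exact ⟨tag a s, elt a, by simp, (Edge.tag_step a s).adj.symm,
      (Edge.step_elt a s).adj⟩

theorem eq_hub_or_down_of_adj_up_of_adj_up {v : Vertex G} {x y : Index G}
    (hx : (graph N).Adj v (up x)) (hy : (graph N).Adj v (up y)) (hxy : x ≠ y) :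
    v = hub ∨ ∃ t, v = down t := by
  rcases eq_of_adj_up hx with rfl | ⟨t, rfl, -⟩ | ⟨a, s, rfl, rfl⟩ | ⟨a, -, rfl, rfl⟩
  · exact .inl rfl
  · exact .inr ⟨t, rfl⟩
  · rcases eq_of_adj_tag hy.symm with h | h | h <;> simp_all
  · rcases eq_of_adj_elt hy.symm with ⟨_, h⟩ | ⟨_, h⟩ | ⟨_, _, h, -⟩ | h <;> simp_all

theorem eq_tag_of_adj_elt_of_adj_up_color {v : Vertex G} {a s : G}
    (ha : (graph N).Adj v (elt a)) (hs : (graph N).Adj v (up (.color s))) : v = tag a s := by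
  rcases eq_of_adj_elt ha with ⟨s', rfl⟩ | ⟨s', rfl⟩ | ⟨b, s', rfl, -⟩ | rfl
  · rcases eq_of_adj_tag hs.symm with h | h | h <;> simp_all [Index.color_injective.eq_iff]
  · rcases eq_of_adj_step hs.symm with h | h | h <;> cases h
  · rcases eq_of_adj_step hs.symm with h | h | h <;> cases h
  · rcases eq_of_adj_up hs with h | ⟨_, h, -⟩ | ⟨_, _, h, -⟩ | ⟨_, -, h, -⟩ <;> cases h

def translate (n : G) : Vertex G → Vertex G
  | leaf => leaf
  | hub => hub
  | up x => up x
  | down t => down t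
  | elt a => elt (n * a)
  | tag a s => tag (n * a) s
  | step a s => step (n * a) s

instance : MulAction G (Vertex G) where
  smul := translate
  one_smul v := show translate 1 v = v by cases v <;> simp [translate]
  mul_smul n m v := show translate (n * m) v = translate n (translate m v) by
    cases v <;> simp [translate, mul_assoc]

theorem Edge.smul {n : G} (hn : n ∈ N) {u v : Vertex G} (h : Edge N u v) :
    Edge N (n • u) (n • v) := by
  cases h with
  | elt_up_mark a ha => exact .elt_up_mark _ (N.mul_mem hn ha)
  | step_elt_mul a s =>
    show Edge N (step (n * a) s) (elt (n * (a * s)))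
    rw [← mul_assoc]
    exact .step_elt_mul _ _
  | _ => constructor <;> assumption

theorem smul_adj {n : G} (hn : n ∈ N) {u v : Vertex G} (h : (graph N).Adj u v) :
    (graph N).Adj (n • u) (n • v) := by
  rcases adj_iff.1 h with ⟨-, h | h⟩
  exacts [(h.smul hn).adj, (h.smul hn).adj.symm]

section Rigidity

variable {f : graph N →g graph N}

theorem map_leaf (hf : Bijective f) : f leaf = leaf := by
  obtain ⟨z, hz⟩ := hf.2 leaf
  obtain rfl | hzl := eq_or_ne z leaf
  · exact hz
  obtain ⟨u, w, huw, hu, hw⟩ := exists_adj_ne_of_ne_leaf hzl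
  have hu' := f.map_adj hu
  have hw' := f.map_adj hw
  rw [hz] at hu' hw'
  exact (huw (hf.1 ((eq_hub_of_adj_leaf hu'.symm).trans (eq_hub_of_adj_leaf hw'.symm).symm))).elim

theorem map_hub (hf : Bijective f) : f hub = hub := by
  have h := f.map_adj (Edge.leaf_hub (N := N)).adj
  rw [map_leaf hf] at h
  exact eq_hub_of_adj_leaf h.symm

theorem exists_map_up (hf : Bijective f) (x : Index G) : ∃ y, f (up x) = up y := by
  have h := f.map_adj (Edge.hub_up (N := N) x).adj
  rw [map_hub hf] at h
  rcases eq_leaf_or_up_of_adj_hub h.symm with h | h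
  · exact absurd (hf.1 (h.trans (map_leaf hf).symm)) (by simp)
  · exact h

theorem exists_map_down (hf : Bijective f) (t : Index G) : ∃ u, f (down t) = down u := by
  obtain ⟨y, hy⟩ := exists_map_up hf t
  obtain ⟨y', hy'⟩ := exists_map_up hf t.succ
  have hne : y ≠ y' := by
    rintro rfl
    exact t.succ_ne (up.inj (hf.1 (hy'.trans hy.symm)))
  have h := f.map_adj (Edge.up_down (N := N) t t (.inr rfl)).adj
  have h' := f.map_adj (Edge.up_down (N := N) t.succ t (.inl t.lt_succ)).adj
  rw [hy] at h
  rw [hy'] at h'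
  rcases eq_hub_or_down_of_adj_up_of_adj_up h.symm h'.symm hne with h | h
  · exact absurd (hf.1 (h.trans (map_hub hf).symm)) (by simp)
  · exact h

theorem exists_eq_up_of_map_eq_up (hf : Bijective f) {z : Vertex G} {y : Index G}
    (h : f z = up y) : ∃ x, z = up x := by
  rcases onTriangle_or_eq z with hz | rfl | rfl | hz | ⟨t, rfl⟩
  · exact absurd (h ▸ hz.map f) (not_onTriangle_up y)
  · rw [map_leaf hf] at h; cases h
  · rw [map_hub hf] at h; cases h
  · exact hz
  · obtain ⟨u, hu⟩ := exists_map_down hf t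
    rw [hu] at h; cases h

theorem map_up_and_map_down (hf : Bijective f) :
    (∀ x, f (up x) = up x) ∧ ∀ t, f (down t) = down t := by
  choose α hα using exists_map_up hf
  choose β hβ using exists_map_down hf
  have hα_surj : Surjective α := fun y => by
    obtain ⟨z, hz⟩ := hf.2 (up y)
    obtain ⟨x, rfl⟩ := exists_eq_up_of_map_eq_up hf hz
    exact ⟨x, up.inj ((hα x).symm.trans hz)⟩
  have hβ_inj : Injective β := fun t u h => down.inj (hf.1 (by rw [hβ, hβ, h]))
  have hle : ∀ t x, Index.lt t x ∨ t = x → Index.lt (β t) (α x) ∨ β t = α x := by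
    intro t x htx
    have h := f.map_adj (Edge.up_down x t htx).adj
    rw [hα, hβ] at h
    obtain ⟨x', hx', hle⟩ := eq_up_of_adj_down h
    rwa [up.inj hx']
  have hid := IsWellOrder.eq_id_of_le_imp_le _ hα_surj hβ_inj hle
  exact ⟨fun x => (hα x).trans (congrArg up (hid x).1),
    fun t => (hβ t).trans (congrArg down (hid t).2)⟩

theorem exists_map_elt_one (hf : Bijective f) : ∃ n ∈ N, f (elt 1) = elt n := by
  have h := f.map_adj (Edge.elt_up_mark 1 N.one_mem).adj
  rw [(map_up_and_map_down hf).1] at h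
  rcases eq_of_adj_up h with h | ⟨t, h, -⟩ | ⟨a, s, -, hs⟩ | ⟨n, hn, h, -⟩
  · exact absurd (hf.1 (h.trans (map_hub hf).symm)) (by simp)
  · exact absurd (hf.1 (h.trans ((map_up_and_map_down hf).2 t).symm)) (by simp)
  · exact absurd hs.symm (Index.color_ne_mark s)
  · exact ⟨n, hn, h⟩

theorem map_tag (hup : ∀ x, f (up x) = up x) {a b : G} (ha : f (elt a) = elt b) (s : G) :
    f (tag a s) = tag b s := by
  have h := f.map_adj (Edge.tag_elt a s).adj
  have h' := f.map_adj (Edge.tag_up_color a s).adj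
  rw [ha] at h
  rw [hup] at h'
  exact eq_tag_of_adj_elt_of_adj_up_color h h'

theorem map_step (hf : Injective f) (hup : ∀ x, f (up x) = up x) {a b : G}
    (ha : f (elt a) = elt b) (s : G) : f (step a s) = step b s := by
  have h := f.map_adj (Edge.tag_step a s).adj
  rw [map_tag hup ha] at h
  rcases eq_of_adj_tag h.symm with h | h | h
  · exact absurd (hf (h.trans ha.symm)) (by simp)
  · exact absurd (hf (h.trans (hup _).symm)) (by simp)
  · exact h

theorem map_elt (hf : Injective f) (hup : ∀ x, f (up x) = up x) {n : G}
    (h1 : f (elt 1) = elt n) (b : G) : f (elt b) = elt (n * b) := by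
  have h := f.map_adj (Edge.step_elt_mul 1 b).adj
  rw [map_step hf hup h1, one_mul] at h
  rcases eq_of_adj_step h.symm with h | h | h
  · exact absurd (hf (h.trans (map_tag hup h1 b).symm)) (by simp)
  · obtain rfl : b = 1 := elt.inj (hf (h.trans h1.symm))
    rw [h, mul_one]
  · exact h

theorem exists_eq_smul (hf : Bijective f) : ∃ n ∈ N, ⇑f = (n • ·) := by
  obtain ⟨hup, hdown⟩ := map_up_and_map_down hf
  obtain ⟨n, hn, h1⟩ := exists_map_elt_one hf
  have helt := map_elt hf.1 hup h1
  refine ⟨n, hn, funext fun v => ?_⟩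
  cases v with
  | leaf => exact map_leaf hf
  | hub => exact map_hub hf
  | up x => exact hup x
  | down t => exact hdown t
  | elt a => exact helt a
  | tag a s => exact map_tag hup (helt a) s
  | step a s => exact map_step hf.1 hup (helt a) s

end Rigidity

variable (N) in
def toBimorphism : N →* biSubmonoid (graph N) :=
  (MulAction.toEndHom.comp N.subtype).codRestrict _ fun n =>
    ⟨MulAction.bijective n.1, fun _ _ => smul_adj n.2⟩

theorem toBimorphism_bijective : Bijective (toBimorphism N) := by
  refine ⟨fun n m h => Subtype.ext ?_, fun ⟨f, hf, hadj⟩ => ?_⟩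
  · have h1 : elt ((n : G) * 1) = elt ((m : G) * 1) := congrFun (congrArg Subtype.val h) (elt 1)
    simpa using h1
  · obtain ⟨n, hn, hfn⟩ := exists_eq_smul (f := ⟨f, hadj _ _⟩) hf
    exact ⟨⟨n, hn⟩, Subtype.ext hfn.symm⟩

variable (N) in
theorem nonempty_biSubmonoid_graph_mulEquiv : Nonempty (biSubmonoid (graph N) ≃* N) :=
  ⟨(MulEquiv.ofBijective _ toBimorphism_bijective).symm⟩

end BimorphismRealization

/-- Every group-embeddable monoid is isomorphic to the bimorphism monoid of some
simple graph. -/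
theorem monoid_embeds_into_group_iso_bimorphism_monoid {M : Type u} [Monoid M]
    (h : ∃ (G : Type u) (_ : Group G) (φ : M →* G), Function.Injective φ) :
    ∃ (V : Type u) (Γ : SimpleGraph V), Nonempty (biSubmonoid Γ ≃* M) := by
  obtain ⟨G, _, φ, hφ⟩ := h
  let toRange : M ≃* MonoidHom.mrange φ := MulEquiv.ofBijective φ.mrangeRestrict
    ⟨fun a b hab => hφ (congrArg Subtype.val hab), φ.mrangeRestrict_surjective⟩
  obtain ⟨e⟩ := BimorphismRealization.nonempty_biSubmonoid_graph_mulEquiv (MonoidHom.mrange φ)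
  exact ⟨_, _, ⟨e.trans toRange.symm⟩⟩
end

section
/- Let G be a simple graph that is connected, and let H be a simple graph that is acyclic (contains no cycles). Then every bijective graph homomorphism f : G → H preserves non-adjacency, and hence is a graph isomorphism from G onto H. -/
namespace SimpleGraph

variable {V W : Type*} {G : SimpleGraph V} {H : SimpleGraph W}

/-- In an acyclic graph the only path between adjacent vertices is the edge itself, so the
injective image of a `G`-path from `a` to `b` must be that edge, and the `G`-path has length one. -/
theorem Hom.adj_of_reachable_of_isAcyclic (hH : H.IsAcyclic) (φ : G →g H)
    (hφ : Function.Injective φ) {a b : V} (hab : G.Reachable a b) (hadj : H.Adj (φ a) (φ b)) :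
    G.Adj a b := by
  classical
  let p : G.Path a b := hab.some.toPath
  have hp : p.map φ hφ = Path.singleton hadj := (hH.subsingleton_path _ _).elim _ _
  have hlen : (p : G.Walk a b).length = 1 := by
    simpa [Path.map, Path.singleton] using congrArg (fun q : H.Path _ _ => q.1.length) hp
  exact Walk.adj_of_length_eq_one hlen

end SimpleGraph

open SimpleGraph in
/-- A bijective graph homomorphism from a connected simple graph to an acyclic simple
graph reflects adjacency, and hence is a graph isomorphism. -/
theorem bijective_hom_connected_to_acyclic_is_iso {V W : Type*}
    {G : SimpleGraph V} {H : SimpleGraph W}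
    (hG : G.Connected) (hH : H.IsAcyclic)
    (f : V → W) (hb : Function.Bijective f)
    (hom : ∀ a b, G.Adj a b → H.Adj (f a) (f b)) :
    (∀ a b, H.Adj (f a) (f b) → G.Adj a b) ∧ ∃ e : G ≃g H, ⇑e = f := by
  have reflect : ∀ a b, H.Adj (f a) (f b) → G.Adj a b := fun a b =>
    Hom.adj_of_reachable_of_isAcyclic hH ⟨f, hom _ _⟩ hb.injective
      (hG.preconnected a b)
  exact ⟨reflect, ⟨Equiv.ofBijective f hb, fun {a b} => ⟨reflect a b, hom a b⟩⟩, rfl⟩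
end

section
/- Let G and H be trees (connected acyclic simple graphs). If G and H are bimorphism equivalent, i.e., there exist a bijective graph homomorphism from G to H and a bijective graph homomorphism from H to G, then G and H are isomorphic as graphs. -/
/-!
An injective homomorphism `f` from a connected graph `G` to an acyclic graph `H` reflects
adjacency: an edge `f a — f b` of `H` is a bridge, so it lies on the image under `f` of every
walk from `a` to `b` in `G`, and by injectivity it is the image of an edge `a — b` of that walk.
-/

namespace SimpleGraph

variable {V W : Type*} {G : SimpleGraph V} {H : SimpleGraph W}

theorem Hom.adj_of_adj_map_of_isAcyclic (f : G →g H) (hf : Function.Injective f)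
    (hG : G.Preconnected) (hH : H.IsAcyclic) {a b : V} (h : H.Adj (f a) (f b)) :
    G.Adj a b := by
  obtain ⟨p⟩ := hG a b
  have hmem : s(f a, f b) ∈ (p.map f).edges :=
    isBridge_iff_forall_walk_mem_edges.mp (isAcyclic_iff_forall_adj_isBridge.mp hH h) _
  rw [Walk.edges_map, ← Sym2.map_mk,
    List.mem_map_of_injective (Sym2.map.injective hf)] at hmem
  exact p.adj_of_mem_edges hmem

noncomputable def Iso.ofBijectiveOfIsAcyclic (f : G →g H) (hf : Function.Bijective f)
    (hG : G.Preconnected) (hH : H.IsAcyclic) : G ≃g H where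
  toEquiv := .ofBijective f hf
  map_rel_iff' := ⟨f.adj_of_adj_map_of_isAcyclic hf.1 hG hH, f.map_adj⟩

end SimpleGraph

theorem bimorphism_equivalent_trees_isomorphic_general {V W : Type*}
    {G : SimpleGraph V} {H : SimpleGraph W}
    (hG : G.IsTree) (hH : H.IsTree)
    (α : V → W) (hα : Function.Bijective α)
    (hαhom : ∀ a b, G.Adj a b → H.Adj (α a) (α b)) :
    Nonempty (G ≃g H) :=
  ⟨.ofBijectiveOfIsAcyclic ⟨α, hαhom _ _⟩ hα hG.connected.preconnected hH.isAcyclic⟩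

/-- Bimorphism-equivalent trees are isomorphic: if there are bijective graph
homomorphisms between the trees `G` and `H` in both directions, then `G ≅ H`. -/
theorem bimorphism_equivalent_trees_isomorphic {V W : Type*}
    {G : SimpleGraph V} {H : SimpleGraph W}
    (hG : G.IsTree) (hH : H.IsTree)
    (α : V → W) (hα : Function.Bijective α)
    (hαhom : ∀ a b, G.Adj a b → H.Adj (α a) (α b))
    (β : W → V) (hβ : Function.Bijective β)
    (hβhom : ∀ a b, H.Adj a b → G.Adj (β a) (β b)) :
    Nonempty (G ≃g H) :=
  bimorphism_equivalent_trees_isomorphic_general hG hH α hα hαhom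
end

section
/- For every cardinal κ there exists a family, indexed by a type of cardinality κ, of simple graphs such that each graph in the family is a tree with trivial automorphism group (its only automorphism is the identity), and distinct members of the family are pairwise non-isomorphic. -/
/-!
For an element `a` of a well-order, let `T a` be the rooted tree whose root has one child for
each `c < a`, the subtree below which is `T c`; concretely, its vertices are the finite strictly
decreasing sequences below `a`. Every vertex is labelled by its last entry (the root by `a`), and
the children of a vertex labelled `d` carry exactly the labels `c < d`. Hence, by well-founded
induction on labels, a root-preserving isomorphism `T a ≃ T b` preserves all labels; in
particular `a = b`, and a root-preserving automorphism is the identity.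

If `#(Iio a)` is infinite and `#(Iio c) < #(Iio a)` for all `c < a`, the root of `T a` is the
unique vertex of degree `#(Iio a)`: any other vertex with label `c` has degree at most
`#(Iio c) + 1`. So every isomorphism between such trees preserves roots. The elements of
`(ω_ κ.ord).ToType` corresponding to the initial ordinals `ω_ α`, `α < κ.ord`, give `κ` such
`a`.
-/

open Set Cardinal SimpleGraph

universe u

namespace SimpleGraph

variable {V V' : Type*} {G : SimpleGraph V} {G' : SimpleGraph V'}

/-- On a cycle, a vertex of maximal height has two distinct neighbours, both of which would have
to be its parent. -/
theorem isAcyclic_of_adj_imp_eq_parent {α : Type*} [LinearOrder α]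
    (height : V → α) (p : V → V)
    (hadj : ∀ ⦃x y⦄, G.Adj x y → height x < height y ∧ x = p y ∨ height y < height x ∧ y = p x) :
    G.IsAcyclic := by
  classical
  intro v c hc
  obtain ⟨u, hu, hmax⟩ := c.support.toFinset.exists_max_image height ⟨v, by simp⟩
  rw [List.mem_toFinset] at hu
  have hc' := hc.rotate hu
  have eq_parent : ∀ w ∈ (c.rotate u hu).support, G.Adj u w → w = p u := by
    intro w hw huw
    rcases hadj huw with ⟨hlt, -⟩ | ⟨-, rfl⟩
    · rw [Walk.mem_support_rotate_iff] at hw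
      exact absurd (hmax w (List.mem_toFinset.mpr hw)) (not_le.mpr hlt)
    · rfl
  exact hc'.snd_ne_penultimate <|
    (eq_parent _ (Walk.getVert_mem_support _ _) (Walk.adj_snd hc'.not_nil)).trans
      (eq_parent _ (Walk.getVert_mem_support _ _) (Walk.adj_penultimate hc'.not_nil).symm).symm

theorem Reachable.dist_map_le (f : G →g G') {u v : V} (h : G.Reachable u v) :
    G'.dist (f u) (f v) ≤ G.dist u v := by
  obtain ⟨w, hw⟩ := h.exists_walk_length_eq_dist
  simpa [hw] using dist_le (w.map f)

theorem Iso.dist_apply (f : G ≃g G') (u v : V) : G'.dist (f u) (f v) = G.dist u v := by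
  by_cases h : G.Reachable u v
  · refine le_antisymm (h.dist_map_le f.toHom) ?_
    simpa using (h.map f.toHom).dist_map_le f.symm.toHom
  · rw [dist_eq_zero_of_not_reachable h,
      dist_eq_zero_of_not_reachable (mt Iso.reachable_iff.mp h)]

end SimpleGraph

variable {W : Type u} [LinearOrder W]

def IsInfiniteInitial (a : W) : Prop := ℵ₀ ≤ #(Iio a) ∧ ∀ c < a, #(Iio c) < #(Iio a)

/-- The vertices of `DecSeq.tree a`: a strictly decreasing sequence `a > x₁ > ⋯ > xₖ` is stored
as the list `[xₖ, …, x₁]`, so that the parent drops the head and the `label` (the head, or `a` at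
the root) bounds the labels of the children. -/
def DecSeq (a : W) : Type u := {l : List W // (l ++ [a]).Pairwise (· < ·)}

namespace DecSeq

variable {a b : W}

def root : DecSeq a := ⟨[], by simp⟩

def label (x : DecSeq a) : W := x.1.headD a

def parent (x : DecSeq a) : DecSeq a :=
  ⟨x.1.tail, x.2.sublist ((List.tail_sublist _).append_right _)⟩

theorem label_le_of_mem {x : DecSeq a} {z : W} (hz : z ∈ x.1 ++ [a]) : x.label ≤ z := by
  obtain ⟨l, hl⟩ := x
  cases l with
  | nil => simp_all [label]
  | cons d t =>
    rcases List.mem_cons.mp hz with rfl | hz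
    · exact le_rfl
    · exact ((List.pairwise_cons.mp hl).1 z hz).le

def cons (x : DecSeq a) (d : Iio x.label) : DecSeq a :=
  ⟨d :: x.1, List.pairwise_cons.mpr ⟨fun _ hz => d.2.trans_le (label_le_of_mem hz), x.2⟩⟩

@[simp] theorem cons_val (x : DecSeq a) (d : Iio x.label) : (x.cons d).1 = d.1 :: x.1 := rfl
@[simp] theorem label_cons (x : DecSeq a) (d : Iio x.label) : (x.cons d).label = d := rfl
@[simp] theorem parent_cons (x : DecSeq a) (d : Iio x.label) : (x.cons d).parent = x := rfl
@[simp] theorem root_val : (root : DecSeq a).1 = [] := rfl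
@[simp] theorem label_root : (root : DecSeq a).label = a := rfl

theorem cons_ne_root (x : DecSeq a) (d : Iio x.label) : x.cons d ≠ root :=
  fun h => List.cons_ne_nil _ _ (congrArg Subtype.val h)

theorem cons_injective (x : DecSeq a) : Function.Injective x.cons := fun _ _ h =>
  Subtype.ext (List.head_eq_of_cons_eq (congrArg Subtype.val h))

theorem label_lt_label_parent {x : DecSeq a} (hx : x ≠ root) : x.label < x.parent.label := by
  obtain ⟨_ | ⟨d, t⟩, hl⟩ := x
  · exact absurd rfl hx
  · exact (List.pairwise_cons.mp hl).1 _ (by cases t <;> simp [label, parent])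

theorem cons_parent {x : DecSeq a} (hx : x ≠ root) :
    x.parent.cons ⟨x.label, label_lt_label_parent hx⟩ = x := by
  obtain ⟨_ | ⟨d, t⟩, hl⟩ := x
  · exact absurd rfl hx
  · rfl

theorem val_eq_label_cons_parent {x : DecSeq a} (hx : x ≠ root) : x.1 = x.label :: x.parent.1 :=
  congrArg Subtype.val (cons_parent hx).symm

theorem length_eq_length_parent_add_one {x : DecSeq a} (hx : x ≠ root) :
    x.1.length = x.parent.1.length + 1 := by
  rw [val_eq_label_cons_parent hx, List.length_cons]

theorem label_lt_of_ne_root {x : DecSeq a} (hx : x ≠ root) : x.label < a :=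
  (label_lt_label_parent hx).trans_le (label_le_of_mem (by simp))

def tree (a : W) : SimpleGraph (DecSeq a) where
  Adj x y := (∃ d, y = x.cons d) ∨ ∃ d, x = y.cons d
  symm := ⟨fun _ _ => Or.symm⟩
  loopless := ⟨fun x h => by
    obtain ⟨d, hd⟩ | ⟨d, hd⟩ := h <;>
    exact List.cons_ne_self _ _ (congrArg Subtype.val hd).symm⟩

theorem tree_adj_cons (x : DecSeq a) (d : Iio x.label) : (tree a).Adj x (x.cons d) :=
  Or.inl ⟨d, rfl⟩

theorem eq_parent_or_eq_parent_of_adj {x y : DecSeq a} (h : (tree a).Adj x y) :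
    y.1.length = x.1.length + 1 ∧ x = y.parent ∨
      x.1.length = y.1.length + 1 ∧ y = x.parent := by
  obtain ⟨d, rfl⟩ | ⟨d, rfl⟩ := h <;> simp

theorem isAcyclic_tree (a : W) : (tree a).IsAcyclic :=
  isAcyclic_of_adj_imp_eq_parent (fun x => x.1.length) parent fun _ _ h => by
    rcases eq_parent_or_eq_parent_of_adj h with ⟨h1, h2⟩ | ⟨h1, h2⟩
    · exact .inl ⟨by omega, h2⟩
    · exact .inr ⟨by omega, h2⟩

@[elab_as_elim]
theorem parent_induction {P : DecSeq a → Prop} (base : P root)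
    (step : ∀ x, x ≠ root → P x.parent → P x) (x : DecSeq a) : P x := by
  obtain ⟨l, hl⟩ := x
  induction l with
  | nil => exact base
  | cons d t ih => exact step _ (fun h => List.cons_ne_nil d t (congrArg Subtype.val h)) (ih _)

theorem adj_parent {x : DecSeq a} (hx : x ≠ root) : (tree a).Adj x.parent x :=
  cons_parent hx ▸ tree_adj_cons _ _

theorem exists_walk_root (x : DecSeq a) : ∃ w : (tree a).Walk root x, w.length = x.1.length := by
  induction x using parent_induction with
  | base => exact ⟨.nil, rfl⟩
  | step x hx ih =>
    obtain ⟨w, hw⟩ := ih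
    exact ⟨w.concat (adj_parent hx),
      by rw [Walk.length_concat, hw, length_eq_length_parent_add_one hx]⟩

theorem isTree_tree (a : W) : (tree a).IsTree where
  connected := (connected_iff_exists_forall_reachable _).mpr
    ⟨root, fun x => (exists_walk_root x).elim fun w _ => w.reachable⟩
  isAcyclic := isAcyclic_tree a

theorem length_le_length_add {x y : DecSeq a} (w : (tree a).Walk x y) :
    y.1.length ≤ x.1.length + w.length := by
  induction w with
  | nil => simp
  | cons h _ ih =>
    rw [Walk.length_cons]
    rcases eq_parent_or_eq_parent_of_adj h with ⟨h1, -⟩ | ⟨h1, -⟩ <;> omega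

theorem dist_root (x : DecSeq a) : (tree a).dist root x = x.1.length := by
  obtain ⟨w, hw⟩ := exists_walk_root x
  refine le_antisymm (hw ▸ dist_le w) ?_
  obtain ⟨v, hv⟩ := w.reachable.exists_walk_length_eq_dist
  simpa [hv] using length_le_length_add v

section RootedIso

variable (f : tree a ≃g tree b) (hf : f root = root)
include hf

theorem length_apply (x : DecSeq a) : (f x).1.length = x.1.length := by
  rw [← dist_root, ← dist_root, ← hf, Iso.dist_apply]

theorem apply_ne_root {x : DecSeq a} (hx : x ≠ root) : f x ≠ root :=
  hf ▸ f.injective.ne hx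

theorem apply_parent {x : DecSeq a} (hx : x ≠ root) : f x.parent = (f x).parent := by
  rcases eq_parent_or_eq_parent_of_adj (f.map_adj_iff.mpr (adj_parent hx))
    with ⟨-, h⟩ | ⟨h, -⟩
  · exact h
  · rw [length_apply f hf, length_apply f hf] at h
    have := length_eq_length_parent_add_one hx
    omega

end RootedIso

theorem neighborSet_root : (tree a).neighborSet root = range (root : DecSeq a).cons := by
  ext y
  constructor
  · rintro (⟨d, rfl⟩ | ⟨d, h⟩)
    · exact ⟨d, rfl⟩
    · exact absurd h.symm (cons_ne_root _ _)
  · rintro ⟨d, rfl⟩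
    exact tree_adj_cons _ _

theorem neighborSet_subset (x : DecSeq a) :
    (tree a).neighborSet x ⊆ insert x.parent (range x.cons) := by
  rintro y (⟨d, rfl⟩ | ⟨d, rfl⟩)
  · exact Or.inr ⟨d, rfl⟩
  · exact Or.inl (parent_cons _ _).symm

theorem mk_neighborSet_root : #((tree a).neighborSet root) = #(Iio a) := by
  rw [neighborSet_root, mk_range_eq _ (cons_injective _), label_root]

theorem mk_neighborSet_le (x : DecSeq a) : #((tree a).neighborSet x) ≤ #(Iio x.label) + 1 := by
  calc #((tree a).neighborSet x) ≤ #(insert x.parent (range x.cons) : Set (DecSeq a)) :=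
        mk_le_mk_of_subset (neighborSet_subset x)
    _ ≤ #(Iio x.label) + 1 := mk_insert_le.trans_eq (by rw [mk_range_eq _ (cons_injective x)])

section WellFounded

variable [WellFoundedLT W]

theorem label_apply (f : tree a ≃g tree b) (hf : f root = root) (x : DecSeq a) :
    (f x).label = x.label := by
  suffices ∀ d, ∀ {a b : W} (f : tree a ≃g tree b), f root = root →
      ∀ x, x.label = d → (f x).label = d from this _ f hf x rfl
  intro d
  induction d using WellFoundedLT.induction with
  | ind d ih =>
  intro a b f hf x hx
  have hfs : f.symm root = root := by rw [← hf, RelIso.symm_apply_apply]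
  -- The children of `f x` are the images of the children of `x`, whose labels are the `e < d`
  -- and are preserved by induction.
  refine eq_of_forall_lt_iff fun e => ⟨fun he => ?_, fun he => ?_⟩
  · set y := f.symm ((f x).cons ⟨e, he⟩)
    have hy : y ≠ root := apply_ne_root f.symm hfs (cons_ne_root _ _)
    have hyx : y.parent = x := by
      rw [← apply_parent f.symm hfs (cons_ne_root _ _), parent_cons, RelIso.symm_apply_apply]
    have hlt : y.label < d := hx ▸ hyx ▸ label_lt_label_parent hy
    have hfy : f y = (f x).cons ⟨e, he⟩ := f.apply_symm_apply _
    have := ih _ hlt f hf y rfl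
    rw [hfy, label_cons] at this
    rwa [← this] at hlt
  · set y := x.cons ⟨e, hx ▸ he⟩
    have hy : y ≠ root := cons_ne_root _ _
    have := ih e he f hf y rfl
    rw [← this, ← parent_cons x ⟨e, hx ▸ he⟩]
    exact apply_parent f hf hy ▸ label_lt_label_parent (apply_ne_root f hf hy)

theorem eq_of_iso_of_apply_root (f : tree a ≃g tree b) (hf : f root = root) : a = b := by
  simpa [hf] using (label_apply f hf root).symm

theorem apply_eq_self_of_apply_root (f : tree a ≃g tree a) (hf : f root = root) (x : DecSeq a) :
    f x = x := by
  induction x using parent_induction with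
  | base => exact hf
  | step x hx ih =>
    apply Subtype.ext
    rw [val_eq_label_cons_parent (apply_ne_root f hf hx), val_eq_label_cons_parent hx,
      ← apply_parent f hf hx, ih, label_apply f hf]

end WellFounded

section InfiniteInitial

variable (ha : IsInfiniteInitial a)
include ha

theorem mk_neighborSet_lt {x : DecSeq a} (hx : x ≠ root) :
    #((tree a).neighborSet x) < #(Iio a) :=
  (mk_neighborSet_le x).trans_lt (add_one_lt_of_lt ha.1 (ha.2 _ (label_lt_of_ne_root hx)))

theorem mk_neighborSet_le_mk_Iio (x : DecSeq a) : #((tree a).neighborSet x) ≤ #(Iio a) := by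
  rcases eq_or_ne x root with rfl | hx
  · exact mk_neighborSet_root.le
  · exact (mk_neighborSet_lt ha hx).le

theorem mk_Iio_le_of_iso (f : tree b ≃g tree a) : #(Iio b) ≤ #(Iio a) :=
  calc #(Iio b) = #((tree b).neighborSet root) := mk_neighborSet_root.symm
    _ = #((tree a).neighborSet (f root)) := mk_congr (f.mapNeighborSet root)
    _ ≤ #(Iio a) := mk_neighborSet_le_mk_Iio ha _

theorem apply_root_of_isInfiniteInitial (hb : IsInfiniteInitial b) (f : tree a ≃g tree b) :
    f root = root := by
  have hab : #(Iio a) = #(Iio b) := (mk_Iio_le_of_iso hb f).antisymm (mk_Iio_le_of_iso ha f.symm)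
  by_contra h
  have := mk_neighborSet_lt hb h
  rw [← mk_congr (f.mapNeighborSet root), mk_neighborSet_root, hab] at this
  exact this.false

variable [WellFoundedLT W]

theorem eq_of_iso (hb : IsInfiniteInitial b) (f : tree a ≃g tree b) : a = b :=
  eq_of_iso_of_apply_root f (apply_root_of_isInfiniteInitial ha hb f)

theorem apply_eq_self (f : tree a ≃g tree a) (x : DecSeq a) : f x = x :=
  apply_eq_self_of_apply_root f (apply_root_of_isInfiniteInitial ha ha f) x

end InfiniteInitial

end DecSeq

section Ordinal

open Ordinal

theorem isInfiniteInitial_toType_mk_omega {o α : Ordinal.{u}} (h : ω_ α < o) :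
    IsInfiniteInitial (ToType.mk ⟨ω_ α, h⟩ : o.ToType) := by
  have mk_Iio : ∀ x : o.ToType, #(Iio x) = (ToType.mk.symm x : Ordinal).card := fun _ => rfl
  refine ⟨?_, fun c hc => ?_⟩
  · rw [mk_Iio, OrderIso.symm_apply_apply, card_omega]
    exact aleph0_le_aleph α
  · rw [mk_Iio, mk_Iio, OrderIso.symm_apply_apply, card_omega, ← lt_ord, ord_aleph]
    have := ToType.mk.symm.strictMono hc
    rwa [OrderIso.symm_apply_apply] at this

theorem exists_injective_isInfiniteInitial (κ : Cardinal.{u}) :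
    ∃ (ι : Type u) (o : Ordinal.{u}) (a : ι → o.ToType),
      #ι = κ ∧ Function.Injective a ∧ ∀ i, IsInfiniteInitial (a i) := by
  let α (i : κ.ord.ToType) : Ordinal := ToType.mk.symm i
  have hα (i) : ω_ (α i) < ω_ κ.ord := omega_lt_omega.2 (ToType.mk.symm i).2
  refine ⟨κ.ord.ToType, ω_ κ.ord, fun i => ToType.mk ⟨ω_ (α i), hα i⟩, mk_ord_toType κ,
    fun i j h => ?_, fun i => isInfiniteInitial_toType_mk_omega (hα i)⟩
  have : α i = α j := omega.injective (congrArg Subtype.val (ToType.mk.injective h))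
  exact ToType.mk.symm.injective (Subtype.ext this)

end Ordinal

/-- For every cardinal `κ` there is a family of `κ` many pairwise non-isomorphic
rigid trees: each member is a tree whose only automorphism is the identity, and
distinct members are non-isomorphic. -/
theorem exists_family_of_rigid_pairwise_nonisomorphic_trees (κ : Cardinal.{u}) :
    ∃ (ι : Type u) (V : ι → Type u) (Γ : ∀ i, SimpleGraph (V i)),
      Cardinal.mk ι = κ ∧
      (∀ i, (Γ i).IsTree) ∧
      (∀ i (e : Γ i ≃g Γ i) (v : V i), e v = v) ∧
      (∀ i j, i ≠ j → IsEmpty (Γ i ≃g Γ j)) := by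
  obtain ⟨ι, o, a, hι, ha_inj, ha⟩ := exists_injective_isInfiniteInitial κ
  exact ⟨ι, fun i => DecSeq (a i), fun i => DecSeq.tree (a i), hι,
    fun i => DecSeq.isTree_tree (a i), fun i => DecSeq.apply_eq_self (ha i),
    fun i j hij => ⟨fun f => hij (ha_inj (DecSeq.eq_of_iso (ha i) (ha j) f))⟩⟩
end

section
/- Every graph in de Groot's family of rigid trees is bimorphism-rigid: if Γ is a tree whose automorphism group is trivial, then the only bimorphism of Γ is the identity map, i.e., Bi(Γ) is the trivial monoid. -/
namespace SimpleGraph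

variable {V W : Type*} {G : SimpleGraph V} {H : SimpleGraph W}

/-- The image of the path from `a` to `b` is a path from `φ a` to `φ b`; in an acyclic graph it
must coincide with the edge `φ a — φ b`, so the original path has length one. -/
theorem Hom.map_adj_iff_of_injective (hG : G.Connected) (hH : H.IsAcyclic) (φ : G →g H)
    (hφ : Function.Injective φ) {a b : V} : H.Adj (φ a) (φ b) ↔ G.Adj a b := by
  classical
  refine ⟨fun h => ?_, φ.map_adj⟩
  let p : G.Path a b := (hG a b).some.toPath
  have hmap : p.map φ hφ = Path.singleton h := (hH.subsingleton_path _ _).elim _ _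
  have hlen : p.1.length = 1 := by
    simpa [Path.map, Path.singleton] using congrArg (fun q : H.Path _ _ => q.1.length) hmap
  exact p.1.adj_of_length_eq_one hlen

noncomputable def Iso.ofBijectiveHom (hG : G.Connected) (hH : H.IsAcyclic) (φ : G →g H)
    (hφ : Function.Bijective φ) : G ≃g H where
  toEquiv := Equiv.ofBijective φ hφ
  map_rel_iff' := φ.map_adj_iff_of_injective hG hH hφ.injective

end SimpleGraph

/-- A rigid tree is bimorphism-rigid: if `Γ` is a tree whose only automorphism is the
identity, then its only bimorphism (bijective adjacency-preserving self-map) is the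
identity map. -/
theorem rigid_tree_is_bimorphism_rigid {V : Type*} {Γ : SimpleGraph V} (ht : Γ.IsTree)
    (hrigid : ∀ (e : Γ ≃g Γ) (v : V), e v = v)
    (f : V → V) (hb : Function.Bijective f)
    (hom : ∀ a b, Γ.Adj a b → Γ.Adj (f a) (f b)) :
    f = id :=
  funext (hrigid (.ofBijectiveHom ht.connected ht.isAcyclic ⟨f, hom _ _⟩ hb))
end

section
/- Let Γ be the simple graph with vertex set ℤ × {0,1} and adjacency: (a,0) ∼ (b,1) iff a = b; (a,0) ∼ (b,0) iff |a − b| = 1; and (a,1) ∼ (b,1) iff a ≤ 0 and |a − b| = 1. Then Γ is rigid: its only automorphism is the identity map. -/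
/-!
Automorphisms preserve degrees. The vertex `(0, 1)` is the only one of degree 2, the leaves are
the `(a, 1)` with `a > 0`, and the vertices adjacent to a leaf are the `(a, 0)` with `a > 0`.
These invariants fix `(0, 1)`, then `(0, 0)`, then the ray of the `(a, 0)` with `a ≥ 0`, one vertex
at a time. Once a vertex is fixed, so is the last unfixed one among its neighbours, and this
propagates leftwards along the ladder `a ≤ 0`.
-/

/-- The graph on `ℤ × {0,1}` (with `false` playing the role of `0` and `true` of `1`):
`(a,0) ∼ (b,1)` iff `a = b`; `(a,0) ∼ (b,0)` iff `|a - b| = 1`; and `(a,1) ∼ (b,1)`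
iff both coordinates are `≤ 0` and `|a - b| = 1`. -/
def GammaZ : SimpleGraph (ℤ × Bool) where
  Adj v w :=
    (v.2 = false ∧ w.2 = false ∧ |v.1 - w.1| = 1) ∨
    (v.2 ≠ w.2 ∧ v.1 = w.1) ∨
    (v.2 = true ∧ w.2 = true ∧ v.1 ≤ 0 ∧ w.1 ≤ 0 ∧ |v.1 - w.1| = 1)
  symm := by
    constructor
    rintro ⟨a, i⟩ ⟨b, j⟩ (⟨hi, hj, h⟩ | ⟨hij, h⟩ | ⟨hi, hj, ha, hb, h⟩)
    · exact Or.inl ⟨hj, hi, by rw [abs_sub_comm]; exact h⟩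
    · exact Or.inr (Or.inl ⟨Ne.symm hij, h.symm⟩)
    · exact Or.inr (Or.inr ⟨hj, hi, hb, ha, by rw [abs_sub_comm]; exact h⟩)
  loopless := by
    constructor
    rintro ⟨a, i⟩ (⟨_, _, h⟩ | ⟨hij, _⟩ | ⟨_, _, _, _, h⟩)
    · simp at h
    · exact hij rfl
    · simp at h

namespace SimpleGraph.Iso

variable {V W : Type*} {G : SimpleGraph V} {G' : SimpleGraph W}

theorem ncard_neighborSet_apply (e : G ≃g G') (v : V) :
    (G'.neighborSet (e v)).ncard = (G.neighborSet v).ncard := by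
  rw [← e.image_neighborSet, Set.ncard_image_of_injective _ e.injective]

theorem exists_adj_apply_iff (e : G ≃g G') {p : V → Prop} {q : W → Prop}
    (hpq : ∀ x, q (e x) ↔ p x) (v : V) :
    (∃ u, G'.Adj (e v) u ∧ q u) ↔ ∃ u, G.Adj v u ∧ p u := by
  constructor
  · rintro ⟨u, hu, hq⟩
    refine ⟨e.symm u, ?_, ?_⟩
    · rwa [← e.map_adj_iff, e.apply_symm_apply]
    · rwa [← hpq, e.apply_symm_apply]
  · rintro ⟨u, hu, hp⟩
    exact ⟨e u, e.map_adj_iff.2 hu, (hpq u).2 hp⟩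

theorem apply_eq_self_of_adj (e : G ≃g G) {p : V → Prop} {u v : V} (hv : e v = v)
    (hu : G.Adj v u) (hpu : p (e u)) (h : ∀ w, G.Adj v w → p w → w = u ∨ e w = w) :
    e u = u := by
  have hvu : G.Adj v (e u) := hv ▸ e.map_adj_iff.2 hu
  exact (h _ hvu hpu).elim id fun h' ↦ e.injective h'

theorem apply_eq_self_of_adj' (e : G ≃g G) {u v : V} (hv : e v = v) (hu : G.Adj v u)
    (h : ∀ w, G.Adj v w → w = u ∨ e w = w) : e u = u :=
  e.apply_eq_self_of_adj (p := fun _ ↦ True) hv hu trivial fun w hw _ ↦ h w hw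

end SimpleGraph.Iso

namespace GammaZ

theorem adj_false_iff (a : ℤ) (w : ℤ × Bool) :
    GammaZ.Adj (a, false) w ↔ w = (a - 1, false) ∨ w = (a + 1, false) ∨ w = (a, true) := by
  obtain ⟨b, j⟩ := w
  cases j <;> simp [GammaZ, abs_eq] <;> omega

theorem adj_true_iff (a : ℤ) (w : ℤ × Bool) :
    GammaZ.Adj (a, true) w ↔
      w = (a, false) ∨ (a ≤ 0 ∧ w = (a - 1, true)) ∨ (a < 0 ∧ w = (a + 1, true)) := by
  obtain ⟨b, j⟩ := w
  cases j <;> simp [GammaZ, abs_eq] <;> omega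

theorem eq_of_adj_of_fst_lt {v w : ℤ × Bool} (h : GammaZ.Adj v w) (hw : w.1 < v.1) :
    w = (v.1 - 1, v.2) := by
  obtain ⟨a, i⟩ := v
  obtain ⟨b, j⟩ := w
  cases i <;> cases j <;> simp_all [GammaZ, abs_eq] <;> omega

theorem ncard_neighborSet_false (a : ℤ) : (GammaZ.neighborSet (a, false)).ncard = 3 := by
  rw [Set.ncard_eq_three]
  refine ⟨(a - 1, false), (a + 1, false), (a, true), by simp; omega, by simp, by simp, ?_⟩
  ext w
  exact adj_false_iff a w

theorem ncard_neighborSet_true_of_pos {a : ℤ} (ha : 0 < a) :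
    (GammaZ.neighborSet (a, true)).ncard = 1 := by
  rw [Set.ncard_eq_one]
  refine ⟨(a, false), ?_⟩
  ext ⟨b, _ | _⟩ <;> simp [adj_true_iff, not_le.2 ha, not_lt.2 ha.le]

theorem ncard_neighborSet_zero_true : (GammaZ.neighborSet (0, true)).ncard = 2 := by
  rw [Set.ncard_eq_two]
  refine ⟨(0, false), (-1, true), by simp, Set.ext fun w ↦ ?_⟩
  simp [adj_true_iff]

theorem ncard_neighborSet_true_of_neg {a : ℤ} (ha : a < 0) :
    (GammaZ.neighborSet (a, true)).ncard = 3 := by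
  rw [Set.ncard_eq_three]
  refine ⟨(a, false), (a - 1, true), (a + 1, true), by simp, by simp, by simp; omega, ?_⟩
  ext ⟨b, _ | _⟩ <;> simp [adj_true_iff, ha, ha.le]

theorem ncard_neighborSet_eq_one_iff (v : ℤ × Bool) :
    (GammaZ.neighborSet v).ncard = 1 ↔ v.2 = true ∧ 0 < v.1 := by
  obtain ⟨a, _ | _⟩ := v
  · simp [ncard_neighborSet_false]
  · rcases lt_trichotomy a 0 with ha | rfl | ha
    · simp [ncard_neighborSet_true_of_neg ha, ha.le]
    · simp [ncard_neighborSet_zero_true]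
    · simp [ncard_neighborSet_true_of_pos ha, ha]

theorem ncard_neighborSet_eq_two_iff (v : ℤ × Bool) :
    (GammaZ.neighborSet v).ncard = 2 ↔ v = (0, true) := by
  obtain ⟨a, _ | _⟩ := v
  · simp [ncard_neighborSet_false]
  · rcases lt_trichotomy a 0 with ha | rfl | ha
    · simp [ncard_neighborSet_true_of_neg ha, ha.ne]
    · simp [ncard_neighborSet_zero_true]
    · simp [ncard_neighborSet_true_of_pos ha, ha.ne']

theorem exists_adj_ncard_neighborSet_eq_one_iff (v : ℤ × Bool) :
    (∃ u, GammaZ.Adj v u ∧ (GammaZ.neighborSet u).ncard = 1) ↔ v.2 = false ∧ 0 < v.1 := by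
  simp only [ncard_neighborSet_eq_one_iff]
  constructor
  · rintro ⟨⟨b, j⟩, hvu, rfl, hb⟩
    rcases (adj_true_iff b v).1 hvu.symm with rfl | ⟨hb', -⟩ | ⟨hb', -⟩
    · exact ⟨rfl, hb⟩
    all_goals omega
  · obtain ⟨a, j⟩ := v
    rintro ⟨rfl, ha⟩
    exact ⟨(a, true), (adj_false_iff a _).2 (by simp), rfl, ha⟩

variable (e : GammaZ ≃g GammaZ)

theorem apply_leaf_iff (v : ℤ × Bool) :
    (e v).2 = true ∧ 0 < (e v).1 ↔ v.2 = true ∧ 0 < v.1 := by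
  rw [← ncard_neighborSet_eq_one_iff, ← ncard_neighborSet_eq_one_iff, e.ncard_neighborSet_apply]

theorem apply_adj_leaf_iff (v : ℤ × Bool) :
    (e v).2 = false ∧ 0 < (e v).1 ↔ v.2 = false ∧ 0 < v.1 := by
  rw [← exists_adj_ncard_neighborSet_eq_one_iff, ← exists_adj_ncard_neighborSet_eq_one_iff]
  exact e.exists_adj_apply_iff (fun x ↦ by rw [e.ncard_neighborSet_apply]) v

theorem apply_zero_true : e (0, true) = (0, true) := by
  rw [← ncard_neighborSet_eq_two_iff, e.ncard_neighborSet_apply, ncard_neighborSet_eq_two_iff]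

/-- Of the two neighbours of `(0, 1)`, only `(0, 0)` is adjacent to a vertex adjacent to a leaf. -/
theorem apply_zero_false : e (0, false) = (0, false) := by
  let p : ℤ × Bool → Prop := fun x ↦ ∃ y, GammaZ.Adj x y ∧ y.2 = false ∧ 0 < y.1
  refine e.apply_eq_self_of_adj (p := p) (apply_zero_true e) ((adj_true_iff 0 _).2 (by simp)) ?_ ?_
  · refine (e.exists_adj_apply_iff (apply_adj_leaf_iff e) _).2 ⟨(1, false), ?_, rfl, one_pos⟩
    exact (adj_false_iff 0 _).2 (by simp)
  · rintro w hw ⟨⟨b, j⟩, hwy, hj, hb⟩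
    rcases (adj_true_iff 0 w).1 hw with rfl | ⟨-, rfl⟩ | ⟨h, -⟩
    · exact Or.inl rfl
    · rcases (adj_true_iff _ _).1 hwy with h | ⟨-, h⟩ | ⟨-, h⟩ <;> simp_all
    · omega

theorem apply_one_false : e (1, false) = (1, false) := by
  refine e.apply_eq_self_of_adj (p := fun x ↦ x.2 = false ∧ 0 < x.1) (apply_zero_false e)
    ((adj_false_iff 0 _).2 (by simp)) ((apply_adj_leaf_iff e _).2 ⟨rfl, one_pos⟩) ?_
  rintro w hw ⟨hw2, hw1⟩
  rcases (adj_false_iff 0 w).1 hw with rfl | rfl | rfl <;> simp_all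

theorem apply_false_of_nonneg {a : ℤ} (ha : 0 ≤ a) : e (a, false) = (a, false) := by
  suffices h : ∀ a, 0 ≤ a → e (a, false) = (a, false) ∧ e (a + 1, false) = (a + 1, false) from
    (h a ha).1
  refine Int.leInduction ⟨apply_zero_false e, by simpa using apply_one_false e⟩ ?_
  rintro a ha ⟨h₀, h₁⟩
  refine ⟨h₁, e.apply_eq_self_of_adj (p := fun x ↦ ¬(x.2 = true ∧ 0 < x.1)) h₁
    ((adj_false_iff _ _).2 (by simp)) (by simp [apply_leaf_iff]) ?_⟩
  rintro w hw hw'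
  rcases (adj_false_iff _ w).1 hw with rfl | rfl | rfl
  · simp [h₀]
  · exact Or.inl rfl
  · exact absurd ⟨rfl, by omega⟩ hw'

theorem apply_of_nonneg {v : ℤ × Bool} (hv : 0 ≤ v.1) : e v = v := by
  obtain ⟨a, _ | _⟩ := v
  · exact apply_false_of_nonneg e hv
  · rcases hv.eq_or_lt with rfl | ha
    · exact apply_zero_true e
    · refine e.apply_eq_self_of_adj' (apply_false_of_nonneg e hv)
        ((adj_false_iff a _).2 (by simp)) fun w hw ↦ ?_
      rcases (adj_false_iff a w).1 hw with rfl | rfl | rfl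
      · exact Or.inr (apply_false_of_nonneg e (by omega))
      · exact Or.inr (apply_false_of_nonneg e (by omega))
      · exact Or.inl rfl

theorem apply_of_le {a : ℤ} (ha : a ≤ 0) {v : ℤ × Bool} (hv : a ≤ v.1) : e v = v := by
  induction a, ha using Int.leInductionDown generalizing v with
  | base => exact apply_of_nonneg e hv
  | pred a ha ih =>
    rcases le_or_gt a v.1 with h | h
    · exact ih h
    obtain ⟨b, i⟩ := v
    obtain rfl : b = a - 1 := by simp only at hv h; omega
    refine e.apply_eq_self_of_adj' (v := (a, i)) (ih le_rfl) ?_ fun w hw ↦ ?_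
    · cases i <;> simp [GammaZ, ha, show a - 1 ≤ 0 by omega]
    · rcases le_or_gt a w.1 with hw' | hw'
      · exact Or.inr (ih hw')
      · exact Or.inl (eq_of_adj_of_fst_lt hw hw')

end GammaZ

/-- The graph `GammaZ` is rigid: its only automorphism is the identity. -/
theorem gammaZ_rigid (e : GammaZ ≃g GammaZ) : ∀ v, e v = v :=
  fun _ ↦ GammaZ.apply_of_le e (min_le_right _ 0) (min_le_left _ _)
end

section
/- Let Γ be the simple graph with vertex set ℤ × {0,1} and adjacency: (a,0) ∼ (b,1) iff a = b; (a,0) ∼ (b,0) iff |a − b| = 1; and (a,1) ∼ (b,1) iff a ≤ 0 and |a − b| = 1. Then the shift map α defined by (a,x)α = (a−1, x) is a bimorphism of Γ that is not an automorphism: α preserves all edges of Γ but maps the non-adjacent pair {(0,1),(1,1)} to the adjacent pair {(−1,1),(0,1)}. -/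
theorem gammaZ_adj_true_true_iff (a b : ℤ) :
    GammaZ.Adj (a, true) (b, true) ↔ a ≤ 0 ∧ b ≤ 0 ∧ |a - b| = 1 := by
  simp [GammaZ]

/-- A left shift keeps every difference `a - b` and keeps the half-line `a ≤ 0` inside itself. -/
theorem gammaZ_adj_sub {n : ℤ} (hn : 0 ≤ n) {v w : ℤ × Bool} (h : GammaZ.Adj v w) :
    GammaZ.Adj (v.1 - n, v.2) (w.1 - n, w.2) := by
  have hdiff : v.1 - n - (w.1 - n) = v.1 - w.1 := by ring
  rcases h with ⟨hv, hw, h⟩ | ⟨hvw, h⟩ | ⟨hv, hw, ha, hb, h⟩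
  · exact Or.inl ⟨hv, hw, hdiff ▸ h⟩
  · exact Or.inr (Or.inl ⟨hvw, by rw [h]⟩)
  · exact Or.inr (Or.inr ⟨hv, hw, by omega, by omega, hdiff ▸ h⟩)

/-- The shift map `(a,x) ↦ (a-1,x)` is a bimorphism of `GammaZ` that is not an
automorphism: it is a bijection preserving all edges, yet it sends the non-adjacent
pair `{(0,1),(1,1)}` to the adjacent pair `{(-1,1),(0,1)}`. -/
theorem gammaZ_shift_is_bimorphism_not_automorphism :
    Function.Bijective (fun v : ℤ × Bool => (v.1 - 1, v.2)) ∧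
    (∀ v w : ℤ × Bool, GammaZ.Adj v w → GammaZ.Adj (v.1 - 1, v.2) (w.1 - 1, w.2)) ∧
    ¬ GammaZ.Adj (0, true) (1, true) ∧
    GammaZ.Adj ((0 : ℤ) - 1, true) ((1 : ℤ) - 1, true) := by
  refine ⟨(Equiv.subRight 1).bijective.prodMap Function.bijective_id,
    fun _ _ => gammaZ_adj_sub zero_le_one, ?_, ?_⟩
  · simp [gammaZ_adj_true_true_iff]
  · norm_num [gammaZ_adj_true_true_iff]
end

section
/- For every group G there exists a simple graph Γ such that every bimorphism of Γ is an automorphism and the automorphism group of Γ is isomorphic to G; in particular, the bimorphism monoid Bi(Γ) is isomorphic (as a monoid) to G. -/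
/-- The automorphism group of a simple graph `Γ`, as the subgroup of the symmetric
group on the vertex set consisting of permutations preserving adjacency and
non-adjacency. -/
def autSubgroup {V : Type*} (Γ : SimpleGraph V) : Subgroup (Equiv.Perm V) where
  carrier := {e | ∀ a b, Γ.Adj (e a) (e b) ↔ Γ.Adj a b}
  one_mem' := by intro a b; simp
  mul_mem' := by
    intro e f he hf a b
    rw [Equiv.Perm.mul_apply, Equiv.Perm.mul_apply, he, hf]
  inv_mem' := by
    intro e he a b
    have h := he (e⁻¹ a) (e⁻¹ b)
    simp only [Equiv.Perm.coe_inv, Equiv.apply_symm_apply] at h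
    exact h.symm

/-!
The graph is a Cayley-type graph of `G` decorated by gadgets. Besides a rigid 21-vertex frame it
has a vertex `point a` for each `a : G` and, for each ordered pair `(a, b)`, a path
`point a — tail a b — head a b — point b` whose `tail` is joined to `label (a⁻¹ * b)`. A well-order
of `G` is recorded on the labels: for `c < d` a vertex `ordered c d` is joined to `label c` and to
`shadow d`, a copy of `label d`. Each of the six gadget classes hangs off its own frame apex.
Left multiplication by `g` is then an automorphism.

Conversely, let `φ` be a bijective endomorphism. The core `frame 0, …, frame 3` is the only
4-clique, since outside it the graph is 3-colourable and only frame vertices touch it; so `φ`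
permutes the core, and following unique common neighbours through the frame, `φ` fixes the frame
pointwise and therefore preserves each gadget class. On labels `φ` induces a surjection that
preserves the well-order, hence is the identity; so `φ (point a)⁻¹ * φ (point b) = a⁻¹ * b`, and
`φ` is left multiplication by the image of `point 1`.
-/

open Function Set

theorem apply_eq_self_of_surjective_of_map_rel {α : Type*} {r : α → α → Prop} [IsWellOrder α r]
    {σ : α → α} (hs : Surjective σ) (hσ : ∀ a b, r a b → r (σ a) (σ b)) (a : α) : σ a = a :=
  InitialSeg.eq_relIso (InitialSeg.refl r) (.ofSurjective (.ofMonotone σ hσ) hs) a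

namespace FruchtGraph

/- The core `0, 1, 2, 3` is a 4-clique, `2, 3, 5, 6, 7, …, 14` is the square of a path, `4` is
joined to `0, 6, 8`, and the apex `15 + k` is joined to `7 + k` and `9 + k`. -/
def frameNeighbours : ℕ → Finset ℕ
  | 0 => {1, 2, 3, 4}
  | 1 => {0, 2, 3}
  | 2 => {0, 1, 3, 5}
  | 3 => {0, 1, 2, 5, 6}
  | 4 => {0, 6, 8}
  | 5 => {2, 3, 6, 7}
  | 6 => {3, 4, 5, 7, 8}
  | 7 => {5, 6, 8, 9, 15}
  | 8 => {4, 6, 7, 9, 10, 16}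
  | 9 => {7, 8, 10, 11, 15, 17}
  | 10 => {8, 9, 11, 12, 16, 18}
  | 11 => {9, 10, 12, 13, 17, 19}
  | 12 => {10, 11, 13, 14, 18, 20}
  | 13 => {11, 12, 14, 19}
  | 14 => {12, 13, 20}
  | 15 => {7, 9}
  | 16 => {8, 10}
  | 17 => {9, 11}
  | 18 => {10, 12}
  | 19 => {11, 13}
  | 20 => {12, 14}
  | _ => ∅

local notation "N" => frameNeighbours

theorem frameNeighbours_symm : ∀ i < 21, ∀ j ∈ N i, i ∈ N j := by decide

theorem frameNeighbours_irrefl : ∀ i < 21, i ∉ N i := by decide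

theorem frame_clique_lt_four : ∀ t < 4, ∀ a ∈ N t, ∀ b ∈ N t, ∀ c ∈ N t,
    b ∈ N a → c ∈ N a → c ∈ N b → a < 4 := by
  decide

def frameColor (i : ℕ) : ℕ := if i < 15 then i % 3 else (i + 2) % 3

theorem frameColor_ne : ∀ i < 21, ∀ j ∈ N i, 4 ≤ i → 4 ≤ j → frameColor i ≠ frameColor j := by
  decide

inductive Vertex (G : Type*)
  | frame (i : Fin 21)
  | point (a : G)
  | label (c : G)
  | shadow (d : G)
  | ordered (c d : G) (h : WellOrderingRel c d)
  | tail (a b : G)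
  | head (a b : G)

open Vertex

variable {G : Type*}

def core : Set (Vertex G) := frame '' {i | (i : ℕ) < 4}

@[simp]
theorem frame_mem_core {i : Fin 21} : frame i ∈ (core : Set (Vertex G)) ↔ (i : ℕ) < 4 :=
  Injective.mem_set_image fun _ _ => Vertex.frame.inj

/- A proper colouring of the graph outside the core: every 4-clique meets the core. -/
def threeColor : Vertex G → ℕ
  | frame i => frameColor i
  | point _ => 0
  | label _ => 2
  | shadow _ => 0
  | ordered .. => 1
  | tail .. => 1
  | head .. => 2

theorem threeColor_lt (v : Vertex G) : threeColor v < 3 := by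
  cases v <;> simp only [threeColor, frameColor] <;> try split_ifs
  all_goals omega

variable [Group G]

def Vertex.Arc : Vertex G → Vertex G → Prop
  | frame i, frame j => (j : ℕ) ∈ N i
  | point _, frame i => i = 15
  | label _, frame i => i = 16
  | shadow _, frame i => i = 17
  | ordered .., frame i => i = 18
  | tail .., frame i => i = 19
  | head .., frame i => i = 20
  | tail a _, point c => c = a
  | head _ b, point c => c = b
  | tail a b, head c d => c = a ∧ d = b
  | tail a b, label c => c = a⁻¹ * b
  | shadow d, label c => c = d
  | ordered c _ _, label e => e = c
  | ordered _ d _, shadow e => e = d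
  | _, _ => False

variable (G) in
def graph : SimpleGraph (Vertex G) where
  Adj x y := Arc x y ∨ Arc y x
  symm := ⟨fun _ _ => Or.symm⟩
  loopless := ⟨fun x h => by
    cases x <;> simp only [Arc, or_self] at h
    exact frameNeighbours_irrefl _ (Fin.is_lt _) h⟩

@[simp]
theorem adj_iff {x y : Vertex G} : (graph G).Adj x y ↔ Arc x y ∨ Arc y x := Iff.rfl

theorem adj_frame {i j : Fin 21} : (graph G).Adj (frame i) (frame j) ↔ (j : ℕ) ∈ N i :=
  ⟨fun h => h.elim id (frameNeighbours_symm _ j.is_lt _), Or.inl⟩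

theorem exists_eq_frame_of_adj {p : Fin 21} {v : Vertex G} (hp : (p : ℕ) < 15)
    (h : (graph G).Adj (frame p) v) : ∃ q : Fin 21, v = frame q ∧ (q : ℕ) ∈ N p := by
  rcases v with q | _ | _ | _ | _ | _ | _
  · exact ⟨q, rfl, adj_frame.1 h⟩
  all_goals simp only [adj_iff, Arc, false_or] at h; subst h; exact absurd hp (by decide)

theorem threeColor_ne {x y : Vertex G} (h : (graph G).Adj x y) (hx : x ∉ core) (hy : y ∉ core) :
    threeColor x ≠ threeColor y := by
  rcases x with i | _ | _ | _ | _ | _ | _ <;> rcases y with j | _ | _ | _ | _ | _ | _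
  case frame.frame =>
    simp only [frame_mem_core, not_lt] at hx hy
    exact frameColor_ne _ i.is_lt _ (adj_frame.1 h) hx hy
  all_goals simp_all [Arc, threeColor, core] <;> decide

theorem mem_core_of_pairwise_adj {v : Fin 4 → Vertex G}
    (hv : Pairwise fun i j => (graph G).Adj (v i) (v j)) (i : Fin 4) : v i ∈ core := by
  obtain ⟨k, t, ht : (t : ℕ) < 4, hvk⟩ : ∃ k, v k ∈ core := by
    by_contra! h
    obtain ⟨i, j, hij, heq⟩ := Fintype.exists_ne_map_eq_of_card_lt
      (fun i => (⟨threeColor (v i), threeColor_lt _⟩ : Fin 3)) (by simp)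
    exact threeColor_ne (hv hij) (h i) (h j) (congrArg Fin.val heq)
  rcases eq_or_ne i k with rfl | hik
  · exact ⟨t, ht, hvk⟩
  obtain ⟨j, l, hji, hjk, hli, hlk, hjl⟩ := (by decide : ∀ i k : Fin 4, i ≠ k →
    ∃ j l : Fin 4, j ≠ i ∧ j ≠ k ∧ l ≠ i ∧ l ≠ k ∧ j ≠ l) i k hik
  have hadj {j} (hjk : j ≠ k) : (graph G).Adj (frame t) (v j) := hvk ▸ hv hjk.symm
  obtain ⟨a, ha, hta⟩ := exists_eq_frame_of_adj (by omega) (hadj hik)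
  obtain ⟨b, hb, htb⟩ := exists_eq_frame_of_adj (by omega) (hadj hjk)
  obtain ⟨c, hc, htc⟩ := exists_eq_frame_of_adj (by omega) (hadj hlk)
  have hab : (graph G).Adj (v i) (v j) := hv hji.symm
  have hac : (graph G).Adj (v i) (v l) := hv hli.symm
  have hbc : (graph G).Adj (v j) (v l) := hv hjl
  simp only [ha, hb, hc, adj_frame] at hab hac hbc
  exact ha ▸ frame_mem_core.2 (frame_clique_lt_four t ht a hta b htb c htc hab hac hbc)

section Frame

variable {φ : graph G →g graph G}

theorem mapsTo_core : MapsTo φ core core := by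
  rintro _ ⟨i, hi : (i : ℕ) < 4, rfl⟩
  have hv : Pairwise fun k l : Fin 4 =>
      (graph G).Adj (φ (frame (k.castLE (by norm_num)))) (φ (frame (l.castLE (by norm_num)))) :=
    fun k l hkl => φ.map_adj (adj_frame.2 (by revert k l; decide))
  exact mem_core_of_pairwise_adj hv ⟨i, hi⟩

theorem map_mem_core_iff (hφ : Injective φ) {v : Vertex G} : φ v ∈ core ↔ v ∈ core := by
  refine ⟨fun h => ?_, fun h => mapsTo_core h⟩
  have hsurj : SurjOn φ core core :=
    (((toFinite _).image _).injOn_iff_bijOn_of_mapsTo mapsTo_core).1 hφ.injOn |>.surjOn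
  obtain ⟨w, hw, hwv⟩ := hsurj h
  exact hφ hwv ▸ hw

theorem exists_map_frame_mem_inter {p q s p' q' : Fin 21} (hp : φ (frame p) = frame p')
    (hq : φ (frame q) = frame q') (hp' : (p' : ℕ) < 15) (hs : (s : ℕ) ∈ N p ∩ N q) :
    ∃ j : Fin 21, φ (frame s) = frame j ∧ (j : ℕ) ∈ N p' ∩ N q' := by
  rw [Finset.mem_inter] at hs
  obtain ⟨j, hj, hjp⟩ := exists_eq_frame_of_adj hp' (hp ▸ φ.map_adj (adj_frame.2 hs.1))
  have hjq : (graph G).Adj (frame q') (frame j) := hq ▸ hj ▸ φ.map_adj (adj_frame.2 hs.2)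
  exact ⟨j, hj, Finset.mem_inter.2 ⟨hjp, adj_frame.1 hjq⟩⟩

theorem map_frame_eq_of_inter_subset (hφ : Injective φ) {p q s p' q' : Fin 21}
    (hp : φ (frame p) = frame p') (hq : φ (frame q) = frame q') (hp' : (p' : ℕ) < 15)
    (hs : (s : ℕ) ∈ N p ∩ N q) (hs' : 4 ≤ (s : ℕ)) (h : ∀ j ∈ N p' ∩ N q', 4 ≤ j → j = s) :
    φ (frame s) = frame s := by
  obtain ⟨j, hj, hjpq⟩ := exists_map_frame_mem_inter hp hq hp' hs
  have hj4 : ¬ (j : ℕ) < 4 := by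
    rw [← frame_mem_core, ← hj, map_mem_core_iff hφ, frame_mem_core]
    omega
  rw [hj, Fin.ext (h j hjpq (by omega))]

theorem map_frame_eq_of_inter_eq_pair (hφ : Injective φ) {p q r s : Fin 21}
    (hp : φ (frame p) = frame p) (hq : φ (frame q) = frame q) (hr : φ (frame r) = frame r)
    (hp' : (p : ℕ) < 15) (hpq : N p ∩ N q = {(r : ℕ), (s : ℕ)}) : φ (frame s) = frame s := by
  obtain ⟨j, hj, hjpq⟩ := exists_map_frame_mem_inter (s := s) hp hq hp' (by simp [hpq])
  rw [hpq, Finset.mem_insert, Finset.mem_singleton] at hjpq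
  rcases hjpq with hjr | hjs
  · rw [Fin.ext hjr, ← hr] at hj
    rw [hφ hj, hr]
  · rw [hj, Fin.ext hjs]

theorem map_frame_eq_of_unique_core_neighbour {i x : Fin 21} (hx : φ (frame x) = frame x)
    (h : (N x).filter (· < 4) = {(i : ℕ)}) : φ (frame i) = frame i := by
  have hi : (i : ℕ) ∈ (N x).filter (· < 4) := h ▸ Finset.mem_singleton_self _
  rw [Finset.mem_filter] at hi
  obtain ⟨t, ht : (t : ℕ) < 4, e⟩ := mapsTo_core (φ := φ) (frame_mem_core.2 hi.2)
  have htx : (graph G).Adj (frame x) (frame t) := e ▸ hx ▸ φ.map_adj (adj_frame.2 hi.1)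
  have : (t : ℕ) ∈ (N x).filter (· < 4) := Finset.mem_filter.2 ⟨adj_frame.1 htx, ht⟩
  rw [h, Finset.mem_singleton] at this
  rw [← e, Fin.ext this]

theorem map_frame_eq (hφ : Injective φ) (i : Fin 21) : φ (frame i) = frame i := by
  obtain ⟨t₂, ht₂ : (t₂ : ℕ) < 4, e₂⟩ : φ (frame 2) ∈ core := mapsTo_core (by simp)
  obtain ⟨t₃, ht₃ : (t₃ : ℕ) < 4, e₃⟩ : φ (frame 3) ∈ core := mapsTo_core (by simp)
  have ht : (t₂ : ℕ) ≠ t₃ := fun h =>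
    absurd (Vertex.frame.inj (hφ (e₂.symm.trans (Fin.ext h ▸ e₃)))) (by decide)
  have key₅ : ∀ a < 4, ∀ b < 4, a ≠ b → ∀ j ∈ N a ∩ N b, 4 ≤ j → j = 5 := by decide
  have key₆ : ∀ a < 4, ∀ j ∈ N 5 ∩ N a, 4 ≤ j → j = 6 := by decide
  have h5 := map_frame_eq_of_inter_subset hφ e₂.symm e₃.symm (s := 5) (by omega) (by decide)
    (by decide) (key₅ _ ht₂ _ ht₃ ht)
  have h6 := map_frame_eq_of_inter_subset hφ h5 e₃.symm (s := 6) (by decide) (by decide)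
    (by decide) (key₆ _ ht₃)
  have h3 := map_frame_eq_of_unique_core_neighbour (i := 3) h6 (by decide)
  have step {p q r : Fin 21} (s : Fin 21) (hp : φ (frame p) = frame p)
      (hq : φ (frame q) = frame q) (hr : φ (frame r) = frame r)
      (h : (p : ℕ) < 15 ∧ N p ∩ N q = {(r : ℕ), (s : ℕ)}) : φ (frame s) = frame s :=
    map_frame_eq_of_inter_eq_pair hφ hp hq hr h.1 h.2
  have h7 := step 7 h5 h6 h3 (by decide)
  have h8 := step 8 h6 h7 h5 (by decide)
  have h9 := step 9 h7 h8 h6 (by decide)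
  have h10 := step 10 h8 h9 h7 (by decide)
  have h11 := step 11 h9 h10 h8 (by decide)
  have h12 := step 12 h10 h11 h9 (by decide)
  have h13 := step 13 h11 h12 h10 (by decide)
  have h14 := step 14 h12 h13 h11 (by decide)
  have h4 := step 4 h6 h8 h7 (by decide)
  have h15 := step 15 h7 h9 h8 (by decide)
  have h16 := step 16 h8 h10 h9 (by decide)
  have h17 := step 17 h9 h11 h10 (by decide)
  have h18 := step 18 h10 h12 h11 (by decide)
  have h19 := step 19 h11 h13 h12 (by decide)
  have h20 := step 20 h12 h14 h13 (by decide)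
  have h2 := step 2 h3 h5 h6 (by decide)
  have h0 := map_frame_eq_of_unique_core_neighbour (i := 0) h4 (by decide)
  have h1 := step 1 h0 h2 h3 (by decide)
  fin_cases i <;> assumption

end Frame

section Gadgets

theorem exists_eq_point_of_adj {w : Vertex G} (hw : ∀ i, w ≠ frame i)
    (h : (graph G).Adj w (frame 15)) : ∃ a, w = point a := by
  cases w <;> simp_all [Arc]

theorem exists_eq_label_of_adj {w : Vertex G} (hw : ∀ i, w ≠ frame i)
    (h : (graph G).Adj w (frame 16)) : ∃ c, w = label c := by
  cases w <;> simp_all [Arc]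

theorem eq_shadow_of_adj {w : Vertex G} {d : G} (h : (graph G).Adj w (frame 17))
    (hd : (graph G).Adj w (label d)) : w = shadow d := by
  cases w <;> simp_all [Arc, frameNeighbours]

theorem exists_eq_ordered_of_adj {w : Vertex G} {c d : G} (h : (graph G).Adj w (frame 18))
    (hc : (graph G).Adj w (label c)) (hd : (graph G).Adj w (shadow d)) :
    ∃ h, w = ordered c d h := by
  cases w <;> simp_all [Arc]

theorem exists_eq_tail_of_adj {w : Vertex G} {a : G} (h : (graph G).Adj w (frame 19))
    (ha : (graph G).Adj w (point a)) : ∃ b, w = tail a b := by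
  cases w <;> simp_all [Arc, frameNeighbours]

theorem eq_head_of_adj {w : Vertex G} {a b b' : G} (h : (graph G).Adj w (frame 20))
    (hb : (graph G).Adj w (point b)) (hab : (graph G).Adj w (tail a b')) :
    w = head a b ∧ b' = b := by
  cases w <;> simp_all [Arc]

variable {φ : graph G →g graph G} {ψ σ : G → G}

theorem map_ne_frame (hφ : Injective φ) (hfix : ∀ i, φ (frame i) = frame i) {v : Vertex G}
    (hv : ∀ i, v ≠ frame i) (i : Fin 21) : φ v ≠ frame i :=
  fun h => hv i (hφ (h.trans (hfix i).symm))

theorem exists_map_point (hφ : Injective φ) (hfix : ∀ i, φ (frame i) = frame i) (a : G) :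
    ∃ a', φ (point a) = point a' :=
  exists_eq_point_of_adj (map_ne_frame hφ hfix (by simp)) (hfix 15 ▸ φ.map_adj (by simp [Arc]))

theorem exists_map_label (hφ : Injective φ) (hfix : ∀ i, φ (frame i) = frame i) (c : G) :
    ∃ c', φ (label c) = label c' :=
  exists_eq_label_of_adj (map_ne_frame hφ hfix (by simp)) (hfix 16 ▸ φ.map_adj (by simp [Arc]))

theorem map_shadow (hfix : ∀ i, φ (frame i) = frame i) (hσ : ∀ c, φ (label c) = label (σ c))
    (d : G) : φ (shadow d) = shadow (σ d) :=
  eq_shadow_of_adj (hfix 17 ▸ φ.map_adj (by simp [Arc])) (hσ d ▸ φ.map_adj (by simp [Arc]))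

theorem exists_map_ordered (hfix : ∀ i, φ (frame i) = frame i)
    (hσ : ∀ c, φ (label c) = label (σ c)) {c d : G} (h : WellOrderingRel c d) :
    ∃ h', φ (ordered c d h) = ordered (σ c) (σ d) h' := by
  have h18 : (graph G).Adj (φ (ordered c d h)) (frame 18) := hfix 18 ▸ φ.map_adj (by simp [Arc])
  have hc : (graph G).Adj (φ (ordered c d h)) (label (σ c)) := hσ c ▸ φ.map_adj (by simp [Arc])
  have hd : (graph G).Adj (φ (ordered c d h)) (shadow (σ d)) :=
    map_shadow hfix hσ d ▸ φ.map_adj (by simp [Arc])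
  exact exists_eq_ordered_of_adj h18 hc hd

theorem map_tail_head (hfix : ∀ i, φ (frame i) = frame i) (hψ : ∀ a, φ (point a) = point (ψ a))
    (a b : G) : φ (tail a b) = tail (ψ a) (ψ b) ∧ φ (head a b) = head (ψ a) (ψ b) := by
  have h19 : (graph G).Adj (φ (tail a b)) (frame 19) := hfix 19 ▸ φ.map_adj (by simp [Arc])
  have ha : (graph G).Adj (φ (tail a b)) (point (ψ a)) := hψ a ▸ φ.map_adj (by simp [Arc])
  obtain ⟨b', hb'⟩ := exists_eq_tail_of_adj h19 ha
  have h20 : (graph G).Adj (φ (head a b)) (frame 20) := hfix 20 ▸ φ.map_adj (by simp [Arc])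
  have hb : (graph G).Adj (φ (head a b)) (point (ψ b)) := hψ b ▸ φ.map_adj (by simp [Arc])
  have hab : (graph G).Adj (φ (head a b)) (tail (ψ a) b') := hb' ▸ φ.map_adj (by simp [Arc])
  obtain ⟨hh, rfl⟩ := eq_head_of_adj h20 hb hab
  exact ⟨hb', hh⟩

theorem map_label_inv_mul (hfix : ∀ i, φ (frame i) = frame i)
    (hψ : ∀ a, φ (point a) = point (ψ a)) (hσ : ∀ c, φ (label c) = label (σ c)) (a b : G) :
    σ (a⁻¹ * b) = (ψ a)⁻¹ * ψ b := by
  have h := φ.map_adj (by simp [Arc] : (graph G).Adj (tail a b) (label (a⁻¹ * b)))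
  rw [(map_tail_head hfix hψ a b).1, hσ] at h
  simpa [Arc] using h

theorem surjective_of_map_label (hφ : Surjective φ) (hfix : ∀ i, φ (frame i) = frame i)
    (hψ : ∀ a, φ (point a) = point (ψ a)) (hσ : ∀ c, φ (label c) = label (σ c)) :
    Surjective σ := by
  intro c
  obtain ⟨v, hv⟩ := hφ (label c)
  cases v with
  | frame i => simp [hfix] at hv
  | point a => simp [hψ] at hv
  | label c' => exact ⟨c', by simpa [hσ] using hv⟩
  | shadow d => simp [map_shadow hfix hσ] at hv
  | ordered c d h =>
    obtain ⟨_, e⟩ := exists_map_ordered hfix hσ h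
    simp [e] at hv
  | tail a b => simp [(map_tail_head hfix hψ a b).1] at hv
  | head a b => simp [(map_tail_head hfix hψ a b).2] at hv

end Gadgets

def translate (g : G) : Vertex G → Vertex G
  | frame i => frame i
  | point a => point (g * a)
  | label c => label c
  | shadow d => shadow d
  | ordered c d h => ordered c d h
  | tail a b => tail (g * a) (g * b)
  | head a b => head (g * a) (g * b)

instance : MulAction G (Vertex G) where
  smul := translate
  one_smul v := by
    change translate 1 v = v
    cases v <;> simp [translate]
  mul_smul g h v := by
    change translate (g * h) v = translate g (translate h v)
    cases v <;> simp [translate, mul_assoc]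

theorem smul_def (g : G) (v : Vertex G) : g • v = translate g v := rfl

theorem arc_smul {x y : Vertex G} (h : Arc x y) (g : G) : Arc (g • x) (g • y) := by
  cases x <;> cases y <;> simp_all [Arc, smul_def, translate, mul_assoc]

theorem smul_adj_iff {g : G} {x y : Vertex G} :
    (graph G).Adj (g • x) (g • y) ↔ (graph G).Adj x y := by
  have key {g : G} {x y : Vertex G} (h : (graph G).Adj x y) : (graph G).Adj (g • x) (g • y) :=
    h.imp (arc_smul · g) (arc_smul · g)
  exact ⟨fun h => by simpa using key (g := g⁻¹) h, key⟩

theorem exists_eq_smul_of_bijective {φ : graph G →g graph G} (hφ : Bijective φ) :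
    ∃ g : G, ∀ v, φ v = g • v := by
  have hfix := map_frame_eq hφ.1
  choose ψ hψ using exists_map_point hφ.1 hfix
  choose σ hσ using exists_map_label hφ.1 hfix
  have hσ_id : ∀ c, σ c = c := apply_eq_self_of_surjective_of_map_rel (r := WellOrderingRel)
    (surjective_of_map_label hφ.2 hfix hψ hσ) fun c d h => (exists_map_ordered hfix hσ h).1
  have hψ_mul (b : G) : ψ b = ψ 1 * b := by
    have h := map_label_inv_mul hfix hψ hσ 1 b
    rw [inv_one, one_mul, hσ_id] at h
    exact (eq_inv_mul_iff_mul_eq.1 h).symm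
  refine ⟨ψ 1, fun v => ?_⟩
  cases v with
  | frame i => simp [hfix, smul_def, translate]
  | point a => simp [hψ, hψ_mul a, smul_def, translate]
  | label c => simp [hσ, hσ_id, smul_def, translate]
  | shadow d => simp [map_shadow hfix hσ, hσ_id, smul_def, translate]
  | ordered c d h =>
    obtain ⟨_, e⟩ := exists_map_ordered hfix hσ h
    simp [e, hσ_id, smul_def, translate]
  | tail a b => simp [(map_tail_head hfix hψ a b).1, hψ_mul a, hψ_mul b, smul_def, translate]
  | head a b => simp [(map_tail_head hfix hψ a b).2, hψ_mul a, hψ_mul b, smul_def, translate]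

theorem toPerm_mem_autSubgroup (g : G) : MulAction.toPerm g ∈ autSubgroup (graph G) :=
  fun _ _ => smul_adj_iff

def toAut : G →* autSubgroup (graph G) :=
  (MulAction.toPermHom G (Vertex G)).codRestrict _ toPerm_mem_autSubgroup

theorem toAut_bijective : Bijective (toAut (G := G)) := by
  refine ⟨fun g g' h => ?_, fun e => ?_⟩
  · have h1 : g • point (1 : G) = g' • point 1 :=
      congrArg (fun e : autSubgroup (graph G) => (e : Equiv.Perm (Vertex G)) (point 1)) h
    simpa [smul_def, translate] using h1
  · obtain ⟨g, hg⟩ := exists_eq_smul_of_bijective (φ := ⟨e.1, (e.2 _ _).2⟩) e.1.bijective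
    exact ⟨g, Subtype.ext (Equiv.ext fun v => (hg v).symm)⟩

end FruchtGraph

/-- For every group `G` there is a simple graph `Γ` all of whose bimorphisms are
automorphisms and whose automorphism group is isomorphic to `G`; in particular
`Bi(Γ) ≅ G`. -/
theorem exists_graph_bimorphisms_are_automorphisms_aut_iso {G : Type u} [Group G] :
    ∃ (V : Type u) (Γ : SimpleGraph V),
      (∀ f : V → V, Function.Bijective f → (∀ a b, Γ.Adj a b → Γ.Adj (f a) (f b)) →
        ∃ e : Equiv.Perm V, e ∈ autSubgroup Γ ∧ ⇑e = f) ∧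
      Nonempty (autSubgroup Γ ≃* G) := by
  refine ⟨FruchtGraph.Vertex G, FruchtGraph.graph G, fun f hf hadj => ?_,
    ⟨(MulEquiv.ofBijective _ FruchtGraph.toAut_bijective).symm⟩⟩
  obtain ⟨g, hg⟩ := FruchtGraph.exists_eq_smul_of_bijective (φ := ⟨f, hadj _ _⟩) hf
  exact ⟨MulAction.toPerm g, FruchtGraph.toPerm_mem_autSubgroup g, funext fun v => (hg v).symm⟩
end
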